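/- Interlacing lemma: Let p_n(x) = a(x-x_1)⋯(x-x_n) and q_n(x) = b(x-y_1)⋯(x-y_n) be real polynomials with a, b > 0 and strictly interlacing real zeros y_1 < x_1 < y_2 < x_2 < ⋯ < y_n < x_n. Then for any real c > 0, the polynomial f_n(x) = p_n(x) + c q_n(x) has n real simple zeros η_1 < ⋯ < η_n satisfying y_k < η_k < x_k for each k = 1, …, n. -/

import Mathlib

/-!
Write `f = a ∏ (X - x_i) + c b ∏ (X - y_i)`. Then `f(y_k) f(x_k) = a c b ∏_i (y_k - x_i)(x_k - y_i)`,
and by interlacing every factor with `i ≠ k` is positive while the one with `i = k` is negative.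
So `f` changes sign on `(y_k, x_k)` and has a root `η_k` there. These open intervals are disjoint
and ordered, so the `η_k` are `n` distinct roots of a polynomial of degree `n` with leading
coefficient `a + c b`, which determines `f`.
-/

open Polynomial

theorem exists_mem_Ioo_eq_zero_of_mul_neg {f : ℝ → ℝ} {u v : ℝ} (huv : u ≤ v)
    (hf : ContinuousOn f (Set.Icc u v)) (h : f u * f v < 0) : ∃ t ∈ Set.Ioo u v, f t = 0 := by
  rcases mul_neg_iff.mp h with ⟨hu, hv⟩ | ⟨hu, hv⟩
  · exact intermediate_value_Ioo' huv hf ⟨hv, hu⟩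
  · exact intermediate_value_Ioo huv hf ⟨hu, hv⟩

namespace Polynomial

variable {R : Type*} [CommRing R] {n : ℕ}

theorem natDegree_fin_prod_X_sub_C [Nontrivial R] (x : Fin n → R) :
    (∏ i, (X - C (x i))).natDegree = n := by
  simp

theorem coeff_fin_prod_X_sub_C_self [Nontrivial R] (x : Fin n → R) :
    (∏ i, (X - C (x i))).coeff n = 1 := by
  simpa using (monic_prod_X_sub_C x Finset.univ).coeff_natDegree

theorem eq_C_coeff_mul_prod_X_sub_C_of_isRoot [IsDomain R] {p : R[X]} {η : Fin n → R}
    (hη : Function.Injective η) (hp : p.natDegree ≤ n) (hroot : ∀ i, p.IsRoot (η i)) :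
    p = C (p.coeff n) * ∏ i, (X - C (η i)) := by
  refine eq_of_degree_sub_lt_of_eval_index_eq Finset.univ hη.injOn ?_ fun i _ => ?_
  · rw [Finset.card_univ, Fintype.card_fin, degree_lt_iff_coeff_zero]
    intro m hm
    rcases hm.eq_or_lt with rfl | hm
    · simp [coeff_fin_prod_X_sub_C_self]
    · rw [coeff_sub, coeff_C_mul, coeff_eq_zero_of_natDegree_lt (hp.trans_lt hm),
        coeff_eq_zero_of_natDegree_lt ((natDegree_fin_prod_X_sub_C η).trans_lt hm)]
      simp
  · simp [(hroot i).eq_zero, eval_prod, Finset.prod_eq_zero (Finset.mem_univ i)]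

theorem C_mul_prod_add_C_mul_prod_eq_of_isRoot [IsDomain R] (a b : R) {x y η : Fin n → R}
    (hη : Function.Injective η)
    (hroot : ∀ i, (C a * ∏ j, (X - C (x j)) + C b * ∏ j, (X - C (y j))).IsRoot (η i)) :
    C a * ∏ j, (X - C (x j)) + C b * ∏ j, (X - C (y j)) = C (a + b) * ∏ i, (X - C (η i)) := by
  have hdeg : (C a * ∏ j, (X - C (x j)) + C b * ∏ j, (X - C (y j))).natDegree ≤ n :=
    natDegree_add_le_of_degree_le
      ((natDegree_C_mul_le _ _).trans (natDegree_fin_prod_X_sub_C x).le)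
      ((natDegree_C_mul_le _ _).trans (natDegree_fin_prod_X_sub_C y).le)
  rw [eq_C_coeff_mul_prod_X_sub_C_of_isRoot hη hdeg hroot]
  simp [coeff_fin_prod_X_sub_C_self]

end Polynomial

section Interlacing

open Finset

variable {n : ℕ} {x y : Fin n → ℝ}

theorem lt_of_interlace (hy : Monotone y)
    (hxy : ∀ i : Fin n, ∀ h : (i : ℕ) + 1 < n, x i < y ⟨(i : ℕ) + 1, h⟩) {i k : Fin n}
    (hik : i < k) : x i < y k :=
  (hxy i (by omega)).trans_le (hy hik)

theorem prod_sub_mul_prod_sub_neg (hy : StrictMono y) (hyx : ∀ i, y i < x i)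
    (hxy : ∀ i : Fin n, ∀ h : (i : ℕ) + 1 < n, x i < y ⟨(i : ℕ) + 1, h⟩) (k : Fin n) :
    (∏ i, (y k - x i)) * ∏ i, (x k - y i) < 0 := by
  rw [← prod_mul_distrib, ← prod_erase_mul _ _ (mem_univ k)]
  refine mul_neg_of_pos_of_neg (prod_pos fun i hi => ?_) ?_
  · rcases (ne_of_mem_erase hi).lt_or_gt with hik | hki
    · exact mul_pos (sub_pos.2 (lt_of_interlace hy.monotone hxy hik))
        (sub_pos.2 ((hy hik).trans (hyx k)))
    · exact mul_pos_of_neg_of_neg (sub_neg.2 ((hy hki).trans (hyx i)))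
        (sub_neg.2 (lt_of_interlace hy.monotone hxy hki))
  · exact mul_neg_of_neg_of_pos (sub_neg.2 (hyx k)) (sub_pos.2 (hyx k))

theorem eval_mul_eval_neg_of_interlace {a b : ℝ} (hab : 0 < a * b) (hy : StrictMono y)
    (hyx : ∀ i, y i < x i)
    (hxy : ∀ i : Fin n, ∀ h : (i : ℕ) + 1 < n, x i < y ⟨(i : ℕ) + 1, h⟩) (k : Fin n) :
    (C a * ∏ j, (X - C (x j)) + C b * ∏ j, (X - C (y j))).eval (y k) *
      (C a * ∏ j, (X - C (x j)) + C b * ∏ j, (X - C (y j))).eval (x k) < 0 := by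
  have hyk : ∏ j, (y k - y j) = 0 := prod_eq_zero (mem_univ k) (sub_self _)
  have hxk : ∏ j, (x k - x j) = 0 := prod_eq_zero (mem_univ k) (sub_self _)
  simp only [eval_add, eval_mul, eval_C, eval_prod, eval_sub, eval_X, hyk, hxk, mul_zero, add_zero,
    zero_add]
  calc _ = a * b * ((∏ j, (y k - x j)) * ∏ j, (x k - y j)) := by ring
    _ < 0 := mul_neg_of_pos_of_neg hab (prod_sub_mul_prod_sub_neg hy hyx hxy k)

end Interlacing

theorem interlacing_lemma_general (n : ℕ) (a b c : ℝ) (ha : 0 < a) (hb : 0 < b) (hc : 0 < c)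
    (x y : Fin n → ℝ) (hy : StrictMono y)
    (hyx : ∀ i, y i < x i)
    (hxy : ∀ i : Fin n, ∀ h : (i : ℕ) + 1 < n, x i < y ⟨(i : ℕ) + 1, h⟩) :
    ∃ η : Fin n → ℝ, StrictMono η ∧ (∀ i, y i < η i ∧ η i < x i) ∧
      (C a * ∏ i, (X - C (x i))) + Polynomial.C c * (C b * ∏ i, (X - C (y i))) =
        C (a + c * b) * ∏ i, (X - C (η i)) := by
  rw [← mul_assoc, ← C_mul]
  set f := C a * ∏ i, (X - C (x i)) + C (c * b) * ∏ i, (X - C (y i))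
  have hsign := eval_mul_eval_neg_of_interlace (by positivity : 0 < a * (c * b)) hy hyx hxy
  choose η hη hroot using fun k =>
    exists_mem_Ioo_eq_zero_of_mul_neg (hyx k).le f.continuous.continuousOn (hsign k)
  have hmono : StrictMono η := fun i j hij =>
    (hη i).2.trans ((lt_of_interlace hy.monotone hxy hij).trans (hη j).1)
  exact ⟨η, hmono, hη, C_mul_prod_add_C_mul_prod_eq_of_isRoot a (c * b) hmono.injective hroot⟩

theorem interlacing_lemma (n : ℕ) (a b c : ℝ) (ha : 0 < a) (hb : 0 < b) (hc : 0 < c)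
    (x y : Fin n → ℝ) (hx : StrictMono x) (hy : StrictMono y)
    (hyx : ∀ i, y i < x i)
    (hxy : ∀ i : Fin n, ∀ h : (i : ℕ) + 1 < n, x i < y ⟨(i : ℕ) + 1, h⟩) :
    ∃ η : Fin n → ℝ, StrictMono η ∧ (∀ i, y i < η i ∧ η i < x i) ∧
      (C a * ∏ i, (X - C (x i))) + Polynomial.C c * (C b * ∏ i, (X - C (y i))) =
        C (a + c * b) * ∏ i, (X - C (η i)) :=
  interlacing_lemma_general n a b c ha hb hc x y hy hyx hxy
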